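/- Let 𝕜 be a field and d ≥ 1. Let the symmetric group S_d act on the rational function field 𝕜(x₁,…,x_d) by 𝕜-algebra automorphisms permuting the variables. Let B be the set of staircase monomials x₁^{a₁}x₂^{a₂}⋯x_{d−1}^{a_{d−1}} with 0 ≤ a_j ≤ d−j for each j (so |B| = d!). Then the d!×d! matrix (w(b))_{w∈S_d, b∈B}, with entries in 𝕜(x₁,…,x_d), is invertible. -/

import Mathlib

/-!
The d!×d! matrix `(w(b))` over `𝕜(x₁,…,x_d)`, where `w` runs over `S_d` and `b` over
the staircase monomials `x₁^{a₁}⋯x_{d−1}^{a_{d−1}}`, `0 ≤ a_j ≤ d−j`, is invertible.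
-/

open MvPolynomial

/-- The staircase matrix: rows indexed by permutations, columns by staircase exponent
vectors `a` with `a j < d - j` (0-indexed), entry `w(x^a)` in the rational function field. -/
noncomputable def staircaseMatrix (k : Type*) [Field k] (d : ℕ) :
    Matrix (Equiv.Perm (Fin d)) ((j : Fin d) → Fin (d - (j : ℕ)))
      (FractionRing (MvPolynomial (Fin d) k)) :=
  Matrix.of fun (w : Equiv.Perm (Fin d)) (a : (j : Fin d) → Fin (d - (j : ℕ))) =>
    algebraMap (MvPolynomial (Fin d) k) (FractionRing (MvPolynomial (Fin d) k))
      (MvPolynomial.rename (⇑w) (∏ j : Fin d, (MvPolynomial.X j) ^ ((a j : ℕ))))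

set_option maxHeartbeats 1000000

open Matrix Kronecker
open Equiv (swap)

section TwoInv
variable {R : Type*} [CommRing R]

/-- Existence of a two-sided inverse for a (possibly rectangular) matrix. -/
def TwoInv {α β : Type*} [Fintype α] [Fintype β] [DecidableEq α] [DecidableEq β]
    (M : Matrix α β R) : Prop :=
  ∃ N : Matrix β α R, M * N = 1 ∧ N * M = 1

variable {α β γ : Type*} [Fintype α] [Fintype β] [Fintype γ]
  [DecidableEq α] [DecidableEq β] [DecidableEq γ]

theorem TwoInv.mul {M : Matrix α β R} {P : Matrix β γ R} (hM : TwoInv M) (hP : TwoInv P) :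
    TwoInv (M * P) := by
  obtain ⟨N, hMN, hNM⟩ := hM
  obtain ⟨Q, hPQ, hQP⟩ := hP
  refine ⟨Q * N, ?_, ?_⟩
  · rw [Matrix.mul_assoc, ← Matrix.mul_assoc P, hPQ, Matrix.one_mul, hMN]
  · rw [Matrix.mul_assoc, ← Matrix.mul_assoc N, hNM, Matrix.one_mul, hQP]

theorem TwoInv.submatrix {α' β' : Type*} [Fintype α'] [Fintype β'] [DecidableEq α']
    [DecidableEq β'] {M : Matrix α β R} (hM : TwoInv M) (e₁ : α' ≃ α) (e₂ : β' ≃ β) :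
    TwoInv (M.submatrix e₁ e₂) := by
  obtain ⟨N, hMN, hNM⟩ := hM
  refine ⟨N.submatrix e₂ e₁, ?_, ?_⟩
  · rw [Matrix.submatrix_mul_equiv, hMN, Matrix.submatrix_one_equiv]
  · rw [Matrix.submatrix_mul_equiv, hNM, Matrix.submatrix_one_equiv]

theorem TwoInv.map {S : Type*} [CommRing S] {M : Matrix α β R} (hM : TwoInv M) (f : R →+* S) :
    TwoInv (M.map f) := by
  obtain ⟨N, hMN, hNM⟩ := hM
  refine ⟨N.map f, ?_, ?_⟩
  · rw [← Matrix.map_mul, hMN, Matrix.map_one f f.map_zero f.map_one]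
  · rw [← Matrix.map_mul, hNM, Matrix.map_one f f.map_zero f.map_one]

theorem TwoInv.vandermonde {F : Type*} [Field F] {m : ℕ} {v : Fin m → F}
    (hv : Function.Injective v) : TwoInv (Matrix.vandermonde v) := by
  have hdet : IsUnit (Matrix.vandermonde v).det := by
    rw [isUnit_iff_ne_zero, Matrix.det_vandermonde]
    refine Finset.prod_ne_zero_iff.2 fun i _ => Finset.prod_ne_zero_iff.2 fun j hj => ?_
    have : i ≠ j := (Finset.mem_Ioi.1 hj).ne'.symm
    exact sub_ne_zero.2 fun h => this (hv h).symm
  obtain ⟨u, hu⟩ := (Matrix.isUnit_iff_isUnit_det _).2 hdet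
  exact ⟨↑u⁻¹, by rw [← hu]; exact u.mul_inv, by rw [← hu]; exact u.inv_mul⟩

end TwoInv

section Block
variable {R : Type*} [CommRing R] {ι m n : Type*} [Fintype ι] [Fintype m] [Fintype n]
  [DecidableEq ι] [DecidableEq m] [DecidableEq n]

theorem TwoInv.block {A : ι → Matrix m n R} (h : ∀ i, TwoInv (A i)) :
    TwoInv (Matrix.of fun (p : ι × m) (q : ι × n) => if p.1 = q.1 then A p.1 p.2 q.2 else 0) := by
  choose N hN hN' using h
  refine ⟨Matrix.of fun (q : ι × n) (p : ι × m) => if q.1 = p.1 then N q.1 q.2 p.2 else 0,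
    ?_, ?_⟩
  · ext ⟨i, x⟩ ⟨i', y⟩
    simp only [Matrix.mul_apply, Fintype.sum_prod_type, Matrix.of_apply, ite_mul, zero_mul,
      mul_ite, mul_zero]
    rw [Finset.sum_eq_single i (fun b _ hb => by simp [Ne.symm hb]) (by simp)]
    simp only [if_pos rfl]
    by_cases hii : i = i'
    · subst hii
      have := congrFun (congrFun (hN i) x) y
      simp only [Matrix.mul_apply] at this
      simp [this, Matrix.one_apply, Prod.ext_iff]
    · simp [hii, Matrix.one_apply, Prod.ext_iff]
  · ext ⟨i, x⟩ ⟨i', y⟩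
    simp only [Matrix.mul_apply, Fintype.sum_prod_type, Matrix.of_apply, ite_mul, zero_mul,
      mul_ite, mul_zero]
    rw [Finset.sum_eq_single i (fun b _ hb => by simp [Ne.symm hb]) (by simp)]
    simp only [if_pos rfl]
    by_cases hii : i = i'
    · subst hii
      have := congrFun (congrFun (hN' i) x) y
      simp only [Matrix.mul_apply] at this
      simp [this, Matrix.one_apply, Prod.ext_iff]
    · simp [hii, Matrix.one_apply, Prod.ext_iff]

end Block

theorem stair_h0 (n : ℕ) : n + 1 - ((0 : Fin (n + 1)) : ℕ) = n + 1 := by simp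

theorem stair_hs (n : ℕ) (j : Fin n) :
    n + 1 - ((j.succ : Fin (n + 1)) : ℕ) = n - (j : ℕ) := by
  rw [Fin.val_succ]; omega

/-- Splitting off the first coordinate of a staircase exponent vector. -/
def stairEquiv (n : ℕ) :
    ((j : Fin (n + 1)) → Fin (n + 1 - (j : ℕ))) ≃
      (Fin (n + 1) × ((j : Fin n) → Fin (n - (j : ℕ)))) where
  toFun a := (Fin.cast (stair_h0 n) (a 0), fun j => Fin.cast (stair_hs n j) (a j.succ))
  invFun q j := Fin.cases (motive := fun j => Fin (n + 1 - (j : ℕ)))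
    (Fin.cast (stair_h0 n).symm q.1) (fun j' => Fin.cast (stair_hs n j').symm (q.2 j')) j
  left_inv a := by
    funext j
    induction j using Fin.cases with
    | zero => dsimp only; rw [Fin.cases_zero]; ext; rfl
    | succ j' => dsimp only; rw [Fin.cases_succ]; simp
  right_inv q := by
    refine Prod.ext ?_ ?_
    · dsimp only; rw [Fin.cases_zero]; simp
    · funext j; dsimp only; rw [Fin.cases_succ]; simp

@[simp] theorem stairEquiv_symm_zero (n : ℕ) (q : Fin (n + 1) × ((j : Fin n) → Fin (n - (j : ℕ)))) :
    (((stairEquiv n).symm q) 0 : ℕ) = q.1 := by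
  simp only [stairEquiv, Equiv.coe_fn_symm_mk]; rw [Fin.cases_zero]; simp

@[simp] theorem stairEquiv_symm_succ (n : ℕ) (q : Fin (n + 1) × ((j : Fin n) → Fin (n - (j : ℕ))))
    (j : Fin n) : (((stairEquiv n).symm q) j.succ : ℕ) = q.2 j := by
  simp only [stairEquiv, Equiv.coe_fn_symm_mk]; rw [Fin.cases_succ]; simp

open Equiv (swap)

theorem staircase_twoInv (k : Type*) [Field k] : ∀ d : ℕ, TwoInv (staircaseMatrix k d) := by
  intro d
  induction d with
  | zero =>
    refine ⟨Matrix.of fun _ _ => 1, ?_, ?_⟩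
    · ext i j
      have : i = j := Subsingleton.elim i j
      subst this
      simp [Matrix.mul_apply, staircaseMatrix, Matrix.one_apply]
    · ext i j
      have : i = j := Subsingleton.elim i j
      subst this
      simp [Matrix.mul_apply, staircaseMatrix, Matrix.one_apply]
  | succ n IH =>
    set A := MvPolynomial (Fin (n + 1)) k with hA
    set L := FractionRing A with hL
    set ι := algebraMap A L with hι
    -- the injective ring homs from the smaller fraction field
    have hrinj : ∀ p : Fin (n + 1),
        Function.Injective (fun j : Fin n => swap 0 p j.succ) :=
      fun p => (Equiv.injective _).comp (Fin.succ_injective n)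
    have ginj : ∀ p : Fin (n + 1), Function.Injective
        ((ι.comp (MvPolynomial.rename (fun j : Fin n => swap 0 p j.succ)).toRingHom :
          MvPolynomial (Fin n) k →+* L)) := fun p =>
      (IsFractionRing.injective A L).comp (MvPolynomial.rename_injective _ (hrinj p))
    let Ψ : Fin (n + 1) → (FractionRing (MvPolynomial (Fin n) k) →+* L) :=
      fun p => IsFractionRing.lift (ginj p)
    -- the block-diagonal matrix
    let B : Matrix (Fin (n + 1) × Equiv.Perm (Fin n))
        (Fin (n + 1) × ((j : Fin n) → Fin (n - (j : ℕ)))) L :=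
      Matrix.of fun pe q =>
        if pe.1 = q.1 then ((staircaseMatrix k n).map (Ψ pe.1)) pe.2 q.2 else 0
    have hB : TwoInv B := TwoInv.block fun p => IH.map (Ψ p)
    -- the Vandermonde ⊗ 1 matrix
    have hvinj : Function.Injective (fun p : Fin (n + 1) => ι (X p)) := by
      intro p q h
      exact MvPolynomial.X_injective (IsFractionRing.injective A L h)
    let K : Matrix (Fin (n + 1) × ((j : Fin n) → Fin (n - (j : ℕ))))
        (Fin (n + 1) × ((j : Fin n) → Fin (n - (j : ℕ)))) L :=
      Matrix.kroneckerMap (· * ·) (Matrix.vandermonde fun p => ι (X p)) 1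
    have hK : TwoInv K := by
      obtain ⟨NV, h1, h2⟩ := TwoInv.vandermonde hvinj
      refine ⟨Matrix.kroneckerMap (· * ·) NV 1, ?_, ?_⟩
      · show (Matrix.vandermonde fun p => ι (X p)) ⊗ₖ 1 * NV ⊗ₖ 1 = 1
        rw [← Matrix.mul_kronecker_mul, h1, Matrix.one_mul, Matrix.one_kronecker_one]
      · show NV ⊗ₖ 1 * (Matrix.vandermonde fun p => ι (X p)) ⊗ₖ 1 = 1
        rw [← Matrix.mul_kronecker_mul, h2, Matrix.one_mul, Matrix.one_kronecker_one]
    -- the key identity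
    have key : (staircaseMatrix k (n + 1)).submatrix
        (⇑(Equiv.Perm.decomposeFin).symm) (⇑(stairEquiv n).symm) = B * K := by
      ext ⟨p, e⟩ ⟨a₀, a'⟩
      rw [Matrix.mul_apply]
      simp only [B, K, Matrix.submatrix_apply, staircaseMatrix, Matrix.of_apply,
        Fintype.sum_prod_type, Matrix.kroneckerMap_apply, Matrix.vandermonde_apply,
        Matrix.one_apply, Matrix.map_apply, mul_ite, mul_one, mul_zero, ite_mul, zero_mul,
        Finset.sum_ite_eq, Finset.sum_ite_eq', Finset.mem_univ, if_true]
      simp only [Ψ, IsFractionRing.lift_algebraMap, RingHom.coe_comp, Function.comp_apply,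
        AlgHom.toRingHom_eq_coe, AlgHom.coe_toRingHom, MvPolynomial.rename_rename, _root_.map_prod,
        _root_.map_pow, MvPolynomial.rename_X, Fin.prod_univ_succ,
        Equiv.Perm.decomposeFin_symm_apply_zero, Equiv.Perm.decomposeFin_symm_apply_succ,
        stairEquiv_symm_zero, stairEquiv_symm_succ, _root_.map_mul, Function.comp]
      ring
    have hM : staircaseMatrix k (n + 1) = (B * K).submatrix
        (⇑(Equiv.Perm.decomposeFin)) (⇑(stairEquiv n)) := by
      rw [← key, Matrix.submatrix_submatrix]
      rw [Equiv.symm_comp_self, Equiv.symm_comp_self, Matrix.submatrix_id_id]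
    rw [hM]
    exact (hB.mul hK).submatrix _ _

theorem stmt19 (k : Type*) [Field k] (d : ℕ) (hd : 1 ≤ d) :
    ∃ N : Matrix ((j : Fin d) → Fin (d - (j : ℕ))) (Equiv.Perm (Fin d))
        (FractionRing (MvPolynomial (Fin d) k)),
      staircaseMatrix k d * N = 1 ∧ N * staircaseMatrix k d = 1 :=
  staircase_twoInv k d
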